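/- Let p ∈ ℝ[t] be a nonconstant polynomial and let π : ℝ → ℝ be the map t ↦ p(t). Then the ring homomorphism φ_π : C(ℝ,ℝ) → C(ℝ,ℝ), f ↦ f∘π, is integral: every continuous function f : ℝ → ℝ satisfies a monic polynomial equation with coefficients of the form g∘π, g ∈ C(ℝ,ℝ). -/

import Mathlib

open ContinuousMap

/-- The ring homomorphism `φ_π : C(N, ℝ) →+* C(M, ℝ)`, `f ↦ f ∘ π`, induced by a
continuous map `π : M → N`. -/
noncomputable def phiPi {M N : Type*} [TopologicalSpace M] [TopologicalSpace N]
    (π : C(M, N)) : C(N, ℝ) →+* C(M, ℝ) :=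
  (ContinuousMap.compRightAlgHom ℝ ℝ π).toRingHom

/-!
The finitely many zeros of `p'` cut the real line into finitely many closed intervals, on each of
which `p` is injective by Rolle's theorem. Since `p` is a closed map, its
restriction to such an interval `J` is a closed embedding, so Tietze extends `f ∘ (p|_J)⁻¹` to
some `g_J ∈ C(ℝ, ℝ)` with `g_J ∘ p = f` on `J`. Then `f` is a root of the monic polynomial
`∏_J (X - g_J ∘ p)`, whose value vanishes at every point because some factor does.
-/

open Polynomial Set

universe u

theorem isIntegralElem_phiPi_of_forall_exists_eq {M N ι : Type*} [TopologicalSpace M]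
    [TopologicalSpace N] [Fintype ι] (π : C(M, N))
    (f : C(M, ℝ)) (g : ι → C(N, ℝ)) (h : ∀ x, ∃ i, g i (π x) = f x) :
    (phiPi π).IsIntegralElem f := by
  refine ⟨∏ i, (X - Polynomial.C (g i)),
    monic_prod_of_monic _ _ fun i _ => monic_X_sub_C (g i), ?_⟩
  ext x
  obtain ⟨i, hi⟩ := h x
  simp only [eval₂_finsetProd, eval₂_sub, eval₂_X, eval₂_C, ContinuousMap.prod_apply]
  exact Finset.prod_eq_zero (Finset.mem_univ i) (by simp [phiPi, hi])

theorem ContinuousMap.exists_eqOn_comp_of_injOn {M : Type*} {N : Type u} {Z : Type*}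
    [TopologicalSpace M] [TopologicalSpace N] [NormalSpace N] [TopologicalSpace Z]
    [TietzeExtension.{u} Z] {π : C(M, N)} (hπ : IsClosedMap π) {s : Set M} (hs : IsClosed s)
    (hinj : InjOn π s) (f : C(M, Z)) : ∃ g : C(N, Z), EqOn (g ∘ π) f s := by
  have hemb : Topology.IsClosedEmbedding (s.domRestrict π) :=
    .of_continuous_injective_isClosedMap (π.continuous.comp continuous_subtype_val)
      hinj.injective (hπ.domRestrict hs)
  obtain ⟨g, hg⟩ := (f.restrict s).exists_extension' hemb
  exact ⟨g, fun x hx => congrFun hg ⟨x, hx⟩⟩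

section Cells

variable {α : Type*} [LinearOrder α]

/-- As `σ` ranges over sign patterns, the nonempty cells are the closed intervals between
consecutive points of `T` together with the two closed half-lines. -/
def Finset.cell (T : Finset α) (σ : T → Bool) : Set α :=
  ⋂ c : T, bif σ c then Set.Ici (c : α) else Set.Iic (c : α)

theorem Finset.isClosed_cell [TopologicalSpace α] [OrderClosedTopology α] (T : Finset α)
    (σ : T → Bool) : IsClosed (T.cell σ) :=
  isClosed_iInter fun c => by cases σ c <;> simp [isClosed_Ici, isClosed_Iic]

theorem Finset.mem_cell_decide_le (T : Finset α) (x : α) :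
    x ∈ T.cell fun c => decide ((c : α) ≤ x) :=
  mem_iInter.2 fun c => by
    by_cases hc : (c : α) ≤ x
    · simp [hc]
    · simpa [hc] using (not_le.1 hc).le

theorem Finset.notMem_Ioo_of_mem_cell {T : Finset α} {σ : T → Bool} {a b : α}
    (ha : a ∈ T.cell σ) (hb : b ∈ T.cell σ) {c : α} (hc : c ∈ T) : c ∉ Set.Ioo a b := by
  rintro ⟨hac, hcb⟩
  have ha' := mem_iInter.1 ha ⟨c, hc⟩
  have hb' := mem_iInter.1 hb ⟨c, hc⟩
  cases hσ : σ ⟨c, hc⟩ <;> simp only [hσ, cond_true, cond_false] at ha' hb'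
  · exact hcb.not_ge hb'
  · exact hac.not_ge ha'

end Cells

theorem injOn_of_deriv_ne_zero_of_mem_Ioo {f : ℝ → ℝ} (hf : Continuous f) {s : Set ℝ}
    (h : ∀ a ∈ s, ∀ b ∈ s, ∀ c ∈ Ioo a b, deriv f c ≠ 0) : InjOn f s := by
  have rolle : ∀ a ∈ s, ∀ b ∈ s, a < b → f a ≠ f b := fun a ha b hb hab hfab => by
    obtain ⟨c, hc, hfc⟩ := exists_deriv_eq_zero hab hf.continuousOn hfab
    exact h a ha b hb c hc hfc
  intro a ha b hb hfab
  by_contra hne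
  rcases lt_or_gt_of_ne hne with hab | hba
  · exact rolle a ha b hb hab hfab
  · exact rolle b hb a ha hba hfab.symm

theorem Polynomial.injOn_eval_cell_roots_derivative {p : ℝ[X]} (hp : derivative p ≠ 0)
    (σ : (derivative p).roots.toFinset → Bool) :
    InjOn p.eval ((derivative p).roots.toFinset.cell σ) := by
  refine injOn_of_deriv_ne_zero_of_mem_Ioo p.continuous fun a ha b hb c hc hpc => ?_
  have hroot : c ∈ (derivative p).roots.toFinset := by
    rw [Multiset.mem_toFinset, mem_roots hp]
    rwa [Polynomial.deriv] at hpc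
  exact Finset.notMem_Ioo_of_mem_cell ha hb hroot hc

/-- For every nonconstant polynomial `p ∈ ℝ[t]`, the ring homomorphism
`φ_π : C(ℝ, ℝ) → C(ℝ, ℝ)`, `f ↦ f ∘ p`, induced by the polynomial map `t ↦ p(t)` is
integral. -/
theorem polynomial_map_integral (p : Polynomial ℝ) (hp : 1 ≤ p.natDegree) :
    (phiPi (⟨fun t => p.eval t, p.continuous⟩ : C(ℝ, ℝ))).IsIntegral := by
  have hp' : derivative p ≠ 0 := mt derivative_eq_zero.1 (by omega)
  intro f
  choose g hg using fun σ => ContinuousMap.exists_eqOn_comp_of_injOn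
    (π := ⟨fun t => p.eval t, p.continuous⟩) p.isClosedMap_eval
    ((derivative p).roots.toFinset.isClosed_cell σ) (injOn_eval_cell_roots_derivative hp' σ) f
  exact isIntegralElem_phiPi_of_forall_exists_eq _ f g fun x =>
    ⟨_, hg _ (Finset.mem_cell_decide_le _ x)⟩
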